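/- For every $m \geq 2$, the Gromov–Hausdorff distance between the vertex sets $P_m$ and $P_{m+1}$ of regular $m$- and $(m+1)$-gons inscribed in the unit circle (with the restricted geodesic metric) equals $\frac{\pi}{m+1}$. -/

import Mathlib

open Real

/-- Vertex set of the regular `n`-gon inscribed in the unit circle, modeled inside
`AddCircle (2π)` whose quotient metric is exactly the geodesic metric
`d(α,β) = min (|α-β|) (2π - |α-β|)`. -/
noncomputable def Pvert (n : ℕ) : Set (AddCircle (2 * π)) :=
  Set.range fun j : Fin n => ((2 * π * j / n : ℝ) : AddCircle (2 * π))

instance (n : ℕ) : Finite (Pvert n) := by unfold Pvert; exact (Set.finite_range _).to_subtype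


instance (n : ℕ) [NeZero n] : Nonempty (Pvert n) := by
  unfold Pvert; exact ⟨⟨_, Set.mem_range_self (0 : Fin n)⟩⟩

/-! Pairing the `k`-th vertex of `P_{m+1}` with the `(k-1)`-th vertex of `P_m` (and `0` with `0`)
moves every point by an angle in `[-2π/(m+1), 0]`; as the circle distance is 1-Lipschitz in the
difference of the points, this correspondence has distortion at most `2π/(m+1)`. Conversely,
`P_{m+1}` is `2π/(m+1)`-separated and has more points than `P_m`, so in an optimal coupling two of
its points are within `d_GH` of a common point of `P_m`, whence `2π/(m+1) ≤ 2 d_GH`. -/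

open Metric Set GromovHausdorff

section GromovHausdorff

variable {X Y ι : Type*} [MetricSpace X] [CompactSpace X] [Nonempty X]
  [MetricSpace Y] [CompactSpace Y] [Nonempty Y]

theorem ghDist_le_of_correspondence [Nonempty ι] (Φ : ι → X) (Ψ : ι → Y)
    (hΦ : Function.Surjective Φ) (hΨ : Function.Surjective Ψ) {ε : ℝ} (hε : 0 < ε)
    (H : ∀ i j, |dist (Φ i) (Φ j) - dist (Ψ i) (Ψ j)| ≤ 2 * ε) : ghDist X Y ≤ ε := by
  let _ : MetricSpace (X ⊕ Y) := glueMetricApprox Φ Ψ ε hε H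
  have hglued (i : ι) : dist (Sum.inl (Φ i) : X ⊕ Y) (Sum.inr (Ψ i)) = ε :=
    glueDist_glued_points Φ Ψ ε i
  have hl : Isometry (Sum.inl : X → X ⊕ Y) := Isometry.of_dist_eq fun _ _ => rfl
  have hr : Isometry (Sum.inr : Y → X ⊕ Y) := Isometry.of_dist_eq fun _ _ => rfl
  refine (ghDist_le_hausdorffDist hl hr).trans (hausdorffDist_le_of_mem_dist hε.le ?_ ?_)
  · rintro _ ⟨x, rfl⟩
    obtain ⟨i, rfl⟩ := hΦ x
    exact ⟨_, mem_range_self (Ψ i), (hglued i).le⟩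
  · rintro _ ⟨y, rfl⟩
    obtain ⟨i, rfl⟩ := hΨ y
    exact ⟨_, mem_range_self (Φ i), (dist_comm _ _).trans_le (hglued i).le⟩

/-- Pigeonhole in an optimal coupling: two points of the family lie within `ghDist X Y` of the
same point of `X`. -/
theorem le_two_mul_ghDist_of_card_lt [Finite X] (u : ι → Y) (hcard : Nat.card X < Nat.card ι)
    {δ : ℝ} (hu : ∀ i j, i ≠ j → δ ≤ dist (u i) (u j)) : δ ≤ 2 * ghDist X Y := by
  rw [← hausdorffDist_optimal (X := X) (Y := Y)]
  set f := optimalGHInjl X Y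
  set g := optimalGHInjr X Y
  have hf := isometry_optimalGHInjl X Y
  have hg := isometry_optimalGHInjr X Y
  have hfc : IsCompact (range f) := isCompact_range hf.continuous
  have hfin : hausdorffEDist (range g) (range f) ≠ ⊤ :=
    hausdorffEDist_ne_top_of_nonempty_of_bounded (range_nonempty _) (range_nonempty _)
      (isCompact_range hg.continuous).isBounded hfc.isBounded
  have hnear (y : Y) : ∃ x, dist (g y) (f x) ≤ hausdorffDist (range f) (range g) := by
    obtain ⟨_, ⟨x, rfl⟩, hx⟩ := hfc.exists_infDist_eq_dist (range_nonempty f) (g y)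
    refine ⟨x, hx ▸ ?_⟩
    rw [hausdorffDist_comm]
    exact infDist_le_hausdorffDist_of_mem (mem_range_self y) hfin
  choose c hc using hnear
  obtain ⟨i, j, hij, hcij⟩ : ∃ i j, c (u i) = c (u j) ∧ i ≠ j := by
    by_contra! h
    exact hcard.not_ge (Nat.card_le_card_of_injective _ fun i j => h i j)
  calc δ ≤ dist (u i) (u j) := hu i j hcij
    _ = dist (g (u i)) (g (u j)) := (hg.dist_eq _ _).symm
    _ ≤ dist (g (u i)) (f (c (u j))) + dist (g (u j)) (f (c (u j))) :=
        dist_triangle_right _ _ _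
    _ ≤ _ := by linarith [hij ▸ hc (u i), hc (u j)]

end GromovHausdorff

theorem abs_dist_add_add_sub_dist_le {E : Type*} [SeminormedAddCommGroup E] (x y u v : E) :
    |dist (x + u) (y + v) - dist x y| ≤ ‖u - v‖ := by
  simpa only [dist_eq_norm, add_sub_add_comm, add_sub_cancel_left] using
    abs_norm_sub_norm_le (x - y + (u - v)) (x - y)

theorem AddCircle.norm_coe_le_abs (p x : ℝ) : ‖(x : AddCircle p)‖ ≤ |x| :=
  QuotientAddGroup.norm_mk_le_norm

namespace RegularPolygon

noncomputable def vertex (n j : ℕ) : AddCircle (2 * π) := ((2 * π * j / n : ℝ) : AddCircle (2 * π))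

theorem vertex_mem_Pvert {n j : ℕ} (h : j < n) : vertex n j ∈ Pvert n := ⟨⟨j, h⟩, rfl⟩

theorem exists_vertex_eq {n : ℕ} {x : AddCircle (2 * π)} (hx : x ∈ Pvert n) :
    ∃ j < n, vertex n j = x := by
  obtain ⟨j, rfl⟩ := hx
  exact ⟨j, j.isLt, rfl⟩

theorem two_pi_div_le_dist_vertex {n j k : ℕ} (hj : j < n) (hk : k < n) (hjk : j ≠ k) :
    2 * π / n ≤ dist (vertex n j) (vertex n k) := by
  wlog hlt : k < j generalizing j k
  · rw [dist_comm]
    exact this hk hj hjk.symm (by omega)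
  have : Fact (0 < 2 * π) := ⟨by positivity⟩
  have hn : (0 : ℝ) < n := by exact_mod_cast (by omega : 0 < n)
  have hdiff : vertex n j - vertex n k = (((j - k : ℕ) / n * (2 * π) : ℝ) : AddCircle (2 * π)) := by
    rw [vertex, vertex, ← AddCircle.coe_sub, Nat.cast_sub hlt.le]
    congr 1
    ring
  have hmin : 1 ≤ min ((j - k) % n) (n - (j - k) % n) := by
    rw [Nat.mod_eq_of_lt (by omega)]
    omega
  rw [dist_eq_norm, hdiff, AddCircle.norm_div_natCast, mul_div_assoc']
  exact div_le_div_of_nonneg_right (le_mul_of_one_le_right (by positivity) (by exact_mod_cast hmin))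
    hn.le

theorem exists_vertex_pred_eq_add {m i : ℕ} (hi : i ≤ m) :
    ∃ δ ∈ Icc (-(2 * (π / (m + 1)))) 0,
      vertex m (i - 1) = vertex (m + 1) i + (δ : AddCircle (2 * π)) := by
  refine ⟨2 * π * (i - 1 : ℕ) / m - 2 * π * i / (m + 1), ?_, ?_⟩
  · rcases i with _ | i
    · norm_num
      positivity
    have hm : (0 : ℝ) < m := by exact_mod_cast (by omega : 0 < m)
    have hi' : (i : ℝ) + 1 ≤ m := by exact_mod_cast hi
    simp only [add_tsub_cancel_right, Nat.cast_add, Nat.cast_one, mem_Icc]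
    constructor
    · have hdecr : 2 * π * i / (m + 1) ≤ 2 * π * i / m := by gcongr; linarith
      have hsplit : 2 * π * (i + 1) / (m + 1) = 2 * π * i / (m + 1) + 2 * (π / (m + 1)) := by ring
      linarith
    · rw [sub_nonpos, div_le_div_iff₀ hm (by positivity)]
      nlinarith [pi_pos]
  · rw [vertex, vertex, ← AddCircle.coe_add]
    congr 1
    push_cast
    ring

theorem abs_dist_vertex_pred_sub_dist_vertex_le {m k l : ℕ} (hk : k ≤ m) (hl : l ≤ m) :
    |dist (vertex m (k - 1)) (vertex m (l - 1)) - dist (vertex (m + 1) k) (vertex (m + 1) l)|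
      ≤ 2 * (π / (m + 1)) := by
  obtain ⟨δk, ⟨hk₁, hk₂⟩, hδk⟩ := exists_vertex_pred_eq_add hk
  obtain ⟨δl, ⟨hl₁, hl₂⟩, hδl⟩ := exists_vertex_pred_eq_add hl
  rw [hδk, hδl]
  refine (abs_dist_add_add_sub_dist_le _ _ _ _).trans ?_
  rw [← AddCircle.coe_sub]
  exact (AddCircle.norm_coe_le_abs _ _).trans (abs_sub_le_iff.2 ⟨by linarith, by linarith⟩)

end RegularPolygon

open RegularPolygon

theorem stmt15 (m : ℕ) (hm : 2 ≤ m) :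
    haveI : NeZero m := ⟨by omega⟩
    GromovHausdorff.ghDist (Pvert m) (Pvert (m + 1)) = π / (m + 1) := by
  have : NeZero m := ⟨by omega⟩
  let small : Fin (m + 1) → Pvert m := fun k => ⟨vertex m (k - 1 : ℕ), vertex_mem_Pvert (by omega)⟩
  let large : Fin (m + 1) → Pvert (m + 1) := fun k => ⟨vertex (m + 1) k, vertex_mem_Pvert k.isLt⟩
  apply le_antisymm
  · refine ghDist_le_of_correspondence small large ?_ ?_ (by positivity)
      fun k l => abs_dist_vertex_pred_sub_dist_vertex_le (by omega) (by omega)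
    · rintro ⟨x, hx⟩
      obtain ⟨j, hj, rfl⟩ := exists_vertex_eq hx
      exact ⟨⟨j + 1, by omega⟩, by simp [small]⟩
    · rintro ⟨x, hx⟩
      obtain ⟨j, hj, rfl⟩ := exists_vertex_eq hx
      exact ⟨⟨j, hj⟩, rfl⟩
  · have hcard : Nat.card (Pvert m) < Nat.card (Fin (m + 1)) :=
      (Finite.card_range_le _).trans_lt (by simp)
    have hsep (k l : Fin (m + 1)) (hkl : k ≠ l) : 2 * π / (m + 1) ≤ dist (large k) (large l) := by
      exact_mod_cast two_pi_div_le_dist_vertex k.isLt l.isLt (Fin.val_ne_of_ne hkl)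
    have := le_two_mul_ghDist_of_card_lt large hcard hsep
    rw [mul_div_assoc] at this
    linarith
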